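/- arXiv:1801.01145 — 4 statements merged into one kernel-verified Lean document; each statement's English description precedes it below -/
import Mathlib

section
/- Let n ≥ 1, q = 2^n, and F_q the finite field with q elements. Let F, g ∈ F_q[X] be polynomials such that g(x)·F(x) = 0 for every x ∈ F_q. Then the polynomial G_F := ∏_{a ∈ F_q, a ≠ 0} gcd(F(X) − a, X^{q−1} − 1) divides g in F_q[X]; in particular g belongs to the ideal of F_q[X]/(X^{q−1} − 1) generated by G_F (i.e., any annihilator of F lies in the q-ary cyclic code of length q − 1 with generator polynomial G_F). -/
open Polynomial

/- Since `g·F` vanishes on all of `F_q`, it is divisible by `X^q - X`, hence by `X^(q-1) - 1`.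
Each factor `gcd (F - a) (X^(q-1) - 1)` with `a ≠ 0` divides `X^(q-1) - 1` and is coprime to `F`,
because `F - (F - a) = a` is a unit; hence it divides `g`. The factors are pairwise coprime for the
same reason, so their product divides `g` as well. -/

theorem isCoprime_sub_C_sub_C {R : Type*} [CommRing R] (F : R[X]) {a b : R}
    (hab : IsUnit (a - b)) : IsCoprime (F - C a) (F - C b) := by
  simpa [sub_comp] using (isCoprime_X_sub_C_of_isUnit_sub hab).map (compRingHom F)

theorem X_pow_card_sub_X_dvd_of_forall_eval_eq_zero {K : Type*} [Field K] [Fintype K] {p : K[X]}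
    (hp : ∀ x, p.eval x = 0) : X ^ Fintype.card K - X ∣ p := by
  have hroots : Multiset.card (X ^ Fintype.card K - X : K[X]).roots =
      (X ^ Fintype.card K - X : K[X]).natDegree := by
    rw [FiniteField.roots_X_pow_card_sub_X, FiniteField.X_pow_card_sub_X_natDegree_eq K
      Fintype.one_lt_card, Finset.card_val, Finset.card_univ]
  rcases eq_or_ne p 0 with rfl | hp0
  · exact dvd_zero _
  refine (splits_iff_card_roots.2 hroots).dvd_of_roots_le_roots
    (FiniteField.X_pow_card_sub_X_ne_zero K Fintype.one_lt_card) ?_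
  rw [FiniteField.roots_X_pow_card_sub_X, Multiset.le_iff_subset Finset.univ.nodup]
  exact fun x _ => (mem_roots hp0).2 (hp x)

theorem X_pow_card_sub_one_sub_one_dvd_of_forall_eval_eq_zero {K : Type*} [Field K] [Fintype K]
    {p : K[X]} (hp : ∀ x, p.eval x = 0) : X ^ (Fintype.card K - 1) - 1 ∣ p := by
  refine dvd_trans ⟨X, ?_⟩ (X_pow_card_sub_X_dvd_of_forall_eval_eq_zero hp)
  conv_lhs => rw [← Nat.sub_add_cancel (Fintype.card_pos (α := K)), pow_succ]
  ring

theorem generator_dvd_annihilator_general (n : ℕ) (Fq : Type) [Field Fq] [Fintype Fq]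
    [DecidableEq Fq] (hq : Fintype.card Fq = 2 ^ n) (F g : Polynomial Fq)
    (hann : ∀ x : Fq, g.eval x * F.eval x = 0) :
    (∏ a ∈ Finset.univ.erase (0 : Fq), gcd (F - C a) (X ^ (2 ^ n - 1) - 1)) ∣ g := by
  have hdvd : X ^ (2 ^ n - 1) - 1 ∣ g * F :=
    hq ▸ X_pow_card_sub_one_sub_one_dvd_of_forall_eval_eq_zero (by simpa using hann)
  have hcoprime {a b : Fq} (hab : a ≠ b) :
      IsCoprime (gcd (F - C a) (X ^ (2 ^ n - 1) - 1)) (F - C b) :=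
    (isCoprime_sub_C_sub_C F (sub_ne_zero.2 hab).isUnit).of_isCoprime_of_dvd_left
      (gcd_dvd_left _ _)
  refine Finset.prod_dvd_of_coprime (fun a _ b _ hab => ?_) (fun a ha => ?_)
  · exact (hcoprime hab).of_isCoprime_of_dvd_right (gcd_dvd_left _ _)
  · have hF : IsCoprime (gcd (F - C a) (X ^ (2 ^ n - 1) - 1)) F := by
      simpa using hcoprime (Finset.ne_of_mem_erase ha)
    exact hF.dvd_of_dvd_mul_right ((gcd_dvd_right _ _).trans hdvd)

/-- If `g·F` vanishes at every point of `F_q` (`q = 2^n`), then the polynomial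
`G_F = ∏_{a ≠ 0} gcd (F - a) (X^(q-1) - 1)` divides `g`; i.e. any annihilator of `F` lies in
the `q`-ary cyclic code of length `q - 1` with generator polynomial `G_F`. -/
theorem generator_dvd_annihilator (n : ℕ) (hn : 1 ≤ n) (Fq : Type) [Field Fq] [Fintype Fq]
    [DecidableEq Fq] (hq : Fintype.card Fq = 2 ^ n) (F g : Polynomial Fq)
    (hann : ∀ x : Fq, g.eval x * F.eval x = 0) :
    (∏ a ∈ Finset.univ.erase (0 : Fq), gcd (F - C a) (X ^ (2 ^ n - 1) - 1)) ∣ g :=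
  generator_dvd_annihilator_general n Fq hq F g hann
end

section
/- Let n, m ≥ 1, F : F_2^n → F_2^m, Δ(x) = ∏_{i=1}^{n}(1 + x_i), and F^c(x) = F(x) + Δ(x)·(1, …, 1). Fix b ∈ F_2^m with F(0) = b, and for a function H : F_2^n → F_2^m let AN_b(H) = {g : F_2^n → F_2 : g ≠ 0 and g(x) = 0 for all x with H(x) = b}. Then AN_b(F^c) = AN_b(F) ∪ {g + Δ : g : F_2^n → F_2 and g(x) = 0 for all x ∈ F^{−1}(b)}; moreover every function g + Δ appearing in the second set is automatically nonzero. (This is the precise form of the paper's identity AN(F^c) = AN(F) ∪ AN(F)^c when 0 ∈ F^{−1}(b).) -/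
/-- `Δ(x) = ∏ (1 + x_i)`, the indicator of the all-zero vector. -/
def deltaFun (n : ℕ) (x : Fin n → ZMod 2) : ZMod 2 := ∏ i, (1 + x i)

/-- The algebraic complement `F^c(x) = F(x) + Δ(x)·(1,…,1)` of an `(n,m)`-function. -/
def algebraicComplement (n m : ℕ) (F : (Fin n → ZMod 2) → (Fin m → ZMod 2))
    (x : Fin n → ZMod 2) : Fin m → ZMod 2 :=
  F x + fun _ => deltaFun n x

/-- The set `AN_b(H)` of nonzero Boolean functions vanishing on `H⁻¹(b)`. -/
def ANb (n m : ℕ) (H : (Fin n → ZMod 2) → (Fin m → ZMod 2)) (b : Fin m → ZMod 2) :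
    Set ((Fin n → ZMod 2) → ZMod 2) :=
  {g | g ≠ 0 ∧ ∀ x, H x = b → g x = 0}

lemma deltaFun_zero (n : ℕ) : deltaFun n 0 = 1 := by
  simp [deltaFun]

lemma deltaFun_ne_zero (n : ℕ) (x : Fin n → ZMod 2) (hx : x ≠ 0) : deltaFun n x = 0 := by
  obtain ⟨i, hi⟩ : ∃ i, x i ≠ 0 := by
    by_contra h
    push_neg at h
    exact hx (funext h)
  apply Finset.prod_eq_zero (Finset.mem_univ i)
  revert hi
  generalize x i = a
  revert a
  decide

lemma add_self_cancel (n : ℕ) (g : (Fin n → ZMod 2) → ZMod 2) :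
    g + deltaFun n + deltaFun n = g := by
  funext x
  simp only [Pi.add_apply]
  have : deltaFun n x + deltaFun n x = 0 := by
    generalize deltaFun n x = a; revert a; decide
  rw [add_assoc, this, add_zero]

/-- if `F(0) = b` then
`AN_b(F^c) = AN_b(F) ∪ {g + Δ : g vanishes on F⁻¹(b)}`, and every `g + Δ` with `g`
vanishing on `F⁻¹(b)` is automatically nonzero. -/
theorem ANb_algebraicComplement (n m : ℕ) (hn : 1 ≤ n) (hm : 1 ≤ m)
    (F : (Fin n → ZMod 2) → (Fin m → ZMod 2)) (b : Fin m → ZMod 2) (hb : F 0 = b) :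
    ANb n m (algebraicComplement n m F) b =
      ANb n m F b ∪
        {h | ∃ g : (Fin n → ZMod 2) → ZMod 2,
          (∀ x, F x = b → g x = 0) ∧ h = g + deltaFun n} ∧
    ∀ g : (Fin n → ZMod 2) → ZMod 2, (∀ x, F x = b → g x = 0) → g + deltaFun n ≠ 0 := by
  have hone : (1 : ZMod 2) ≠ 0 := by decide
  -- g+Δ nonzero
  have hnz : ∀ g : (Fin n → ZMod 2) → ZMod 2, (∀ x, F x = b → g x = 0) →
      g + deltaFun n ≠ 0 := by
    intro g hg h0
    have := congrFun h0 0
    simp only [Pi.add_apply, Pi.zero_apply, deltaFun_zero, hg 0 hb, zero_add] at this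
    exact hone this
  -- key: F^c x = b ↔ (x ≠ 0 ∧ F x = b)
  have hkey : ∀ x, algebraicComplement n m F x = b ↔ (x ≠ 0 ∧ F x = b) := by
    intro x
    constructor
    · intro h
      by_cases hx : x = 0
      · exfalso
        subst hx
        have hthis := congrFun h ⟨0, hm⟩
        simp only [algebraicComplement, Pi.add_apply, deltaFun_zero] at hthis
        rw [hb] at hthis
        exact hone (add_left_cancel (hthis.trans (add_zero _).symm))
      · refine ⟨hx, ?_⟩
        funext i
        have := congrFun h i
        simpa [algebraicComplement, deltaFun_ne_zero n x hx] using this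
    · rintro ⟨hx, hFx⟩
      funext i
      simp [algebraicComplement, deltaFun_ne_zero n x hx, congrFun hFx i]
  refine ⟨?_, hnz⟩
  ext h
  constructor
  · rintro ⟨hne, hvan⟩
    by_cases h0 : h 0 = 0
    · left
      refine ⟨hne, fun x hx => ?_⟩
      by_cases hx0 : x = 0
      · subst hx0; exact h0
      · exact hvan x ((hkey x).2 ⟨hx0, hx⟩)
    · right
      refine ⟨h + deltaFun n, fun x hx => ?_, (add_self_cancel n h).symm⟩
      by_cases hx0 : x = 0
      · subst hx0
        simp only [Pi.add_apply, deltaFun_zero]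
        have : h 0 = 1 := by
          generalize h 0 = a at h0 ⊢; revert h0 a; decide
        rw [this]; decide
      · simp [Pi.add_apply, deltaFun_ne_zero n x hx0, hvan x ((hkey x).2 ⟨hx0, hx⟩)]
  · rintro (⟨hne, hvan⟩ | ⟨g, hg, rfl⟩)
    · exact ⟨hne, fun x hx => hvan x ((hkey x).1 hx).2⟩
    · refine ⟨hnz g hg, fun x hx => ?_⟩
      obtain ⟨hx0, hFx⟩ := (hkey x).1 hx
      simp [Pi.add_apply, deltaFun_ne_zero n x hx0, hg x hFx]
end

section
/- Let n ≥ 1, q = 2^n, F_q the finite field with q elements, and let f : F_q → F_2 be a Boolean function. Let α be a primitive element of F_q, let l ≥ 0 and k ≥ 0 be integers, let δ be an integer with 1 ≤ δ ≤ q − 1, and let m ≥ 1 be an integer with gcd(m, q − 1) = 1. Suppose the zero set {x ∈ F_q : f(x) = 0} contains the union ∪_{j=0}^{k} V(α, l + jm + δ − 1, q − δ). Let e be the smallest positive integer such that ∑_{i=1}^{e} binom(n, i) ≥ q − δ + k. Then every nonzero polynomial g ∈ F_q[X] of degree at most q − 1 with g(x) = 0 for all x ∈ F_q with f(x) = 0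 has algebraic degree at least e − 1; that is, LDA(1 + f) ≥ e − 1. -/
/-!
Suppose `algDeg g < e - 1`. Minimality of `e` forces `e ≤ n`, so the monomial `X^(q-1)`, whose
exponent has 2-weight `n`, does not occur in `g`, and every exponent `a` of `g` lies below the
order `q - 1` of `α` and of `αᵐ`. Vanishing on the `k + 1` runs `V(α, l + jm + δ - 1, q - δ)` is
then the Hartmann–Tzeng system `∑ₐ cₐ (αᵃ)ⁱ ((αᵐ)ᵃ)ʲ = 0` (`i < q - δ`, `j ≤ k`), which forces at
least `q - δ + k + 1` monomials. But at most `∑_{i ≤ d} C(n, i)` exponents below `2ⁿ` have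
2-weight `≤ d`, and for `d = algDeg g` minimality of `e` makes this at most `q - δ + k`.
-/

open Polynomial

/-- The algebraic degree of a polynomial over `F_{2^n}` (in univariate form): the maximum
2-weight (number of ones in the binary expansion) of an exponent with nonzero coefficient. -/
def algDeg {Fq : Type} [Field Fq] (g : Polynomial Fq) : ℕ :=
  g.support.sup fun i => (Nat.digits 2 i).sum

open Finset

theorem Nat.length_bitIndices (n : ℕ) : n.bitIndices.length = (Nat.digits 2 n).sum := by
  induction n using Nat.evenOddRec with
  | h0 => simp
  | h_even n ih =>
    rcases eq_or_ne n 0 with rfl | hn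
    · simp
    · rw [Nat.bitIndices_two_mul, List.length_map, ih, ← zero_add (2 * n),
        Nat.digits_add 2 one_lt_two 0 n two_pos (.inr hn), List.sum_cons, zero_add]
  | h_odd n ih =>
    rw [Nat.bitIndices_two_mul_add_one, List.length_cons, List.length_map, ih, add_comm (2 * n),
      Nat.digits_add 2 one_lt_two 1 n one_lt_two (.inl one_ne_zero), List.sum_cons, add_comm]

theorem Nat.digits_two_sum_two_pow_sub_one (n : ℕ) : (Nat.digits 2 (2 ^ n - 1)).sum = n := by
  induction n with
  | zero => simp
  | succ n ih =>
    have : 2 ^ (n + 1) - 1 = 1 + 2 * (2 ^ n - 1) := by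
      have := Nat.one_le_two_pow (n := n); rw [pow_succ]; omega
    rw [this, Nat.digits_add 2 one_lt_two 1 _ one_lt_two (.inl one_ne_zero), List.sum_cons, ih,
      add_comm]

theorem Nat.sum_range_choose_eq_one_add_sum_Icc (n d : ℕ) :
    ∑ j ∈ range (d + 1), n.choose j = 1 + ∑ j ∈ Icc 1 d, n.choose j := by
  rw [range_eq_Ico, sum_eq_sum_Ico_succ_bot (Nat.succ_pos d), Nat.choose_zero_right,
    zero_add, Nat.succ_eq_add_one, Ico_add_one_right_eq_Icc]

theorem Nat.sum_Icc_choose_eq_of_le {n e : ℕ} (h : n ≤ e) :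
    ∑ i ∈ Icc 1 e, n.choose i = ∑ i ∈ Icc 1 n, n.choose i :=
  (sum_subset (Icc_subset_Icc_right h) fun i hi hin =>
    Nat.choose_eq_zero_of_lt (by simp_all)).symm

/-- `a ↦ {bit positions of a}` embeds the numbers below `2ⁿ` of 2-weight `j` into the
`j`-subsets of `range n`. -/
theorem card_le_sum_choose_of_digits_sum_le {S : Finset ℕ} {n d : ℕ} (hS : ∀ a ∈ S, a < 2 ^ n)
    (hw : ∀ a ∈ S, (Nat.digits 2 a).sum ≤ d) : #S ≤ ∑ j ∈ range (d + 1), n.choose j := by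
  have hcard : #((range (d + 1)).biUnion fun j => (range n).powersetCard j) =
      ∑ j ∈ range (d + 1), n.choose j := by
    rw [card_biUnion fun i _ j _ hij => pairwise_disjoint_powersetCard _ hij]
    simp
  rw [← hcard]
  refine card_le_card_of_injOn (fun a => a.bitIndices.toFinset) (fun a ha => ?_) ?_
  · have hlen : #a.bitIndices.toFinset = (Nat.digits 2 a).sum := by
      rw [List.toFinset_card_of_nodup Nat.bitIndices_nodup, Nat.length_bitIndices]
    simp only [coe_biUnion, coe_range, Set.mem_Iio, Set.mem_iUnion, mem_coe, mem_powersetCard]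
    refine ⟨_, Nat.lt_succ_of_le (hlen.trans_le (hw a ha)), fun i hi => ?_, rfl⟩
    have := Nat.two_pow_le_of_mem_bitIndices (List.mem_toFinset.mp hi)
    rw [mem_range, ← Nat.pow_lt_pow_iff_right one_lt_two]
    exact this.trans_lt (hS a ha)
  · intro a _ b _ hab
    rw [← sum_toFinset_bitIndices_two_pow a, ← sum_toFinset_bitIndices_two_pow b]
    exact congrArg (fun s : Finset ℕ => ∑ i ∈ s, 2 ^ i) hab

theorem Finset.eq_zero_of_forall_sum_mul_pow_eq_zero {K ι : Type*} [Field K] {T : Finset ι}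
    {B v : ι → K} (hB : Set.InjOn B T) (h : ∀ i < #T, ∑ a ∈ T, v a * B a ^ i = 0) :
    ∀ a ∈ T, v a = 0 := by
  set e := T.equivFin.symm
  have hsum (F : ι → K) : ∑ u, F (e u) = ∑ a ∈ T, F a :=
    (e.sum_comp fun x => F x).trans (sum_coe_sort T F)
  have hv : (fun u => v (e u)) = 0 := by
    refine Matrix.eq_zero_of_forall_pow_sum_mul_pow_eq_zero (f := fun u => B (e u))
      (fun u w huw => e.injective (Subtype.ext (hB (e u).2 (e w).2 huw))) fun i => ?_
    rw [hsum fun a => v a * B a ^ (i : ℕ)]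
    exact h i i.2
  intro a ha
  simpa using congrFun hv (e.symm ⟨a, ha⟩)

theorem sum_mul_eval_mul_pow_eq_zero {K ι : Type*} [Field K] {S : Finset ι} {c B γ : ι → K}
    {i k : ℕ} (H : ∀ j ≤ k, ∑ a ∈ S, c a * B a ^ i * γ a ^ j = 0) {Q : K[X]}
    (hQ : Q.natDegree ≤ k) : ∑ a ∈ S, c a * Q.eval (γ a) * B a ^ i = 0 := by
  simp_rw [eval_eq_sum_range' (Nat.lt_succ_of_le hQ), mul_sum, sum_mul]
  rw [sum_comm]
  refine sum_eq_zero fun j hj => ?_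
  have hj : j ≤ k := Nat.lt_succ_iff.mp (mem_range.mp hj)
  calc ∑ a ∈ S, c a * (Q.coeff j * γ a ^ j) * B a ^ i
      = Q.coeff j * ∑ a ∈ S, c a * B a ^ i * γ a ^ j := by rw [mul_sum]; congr! 1; ring
    _ = 0 := by rw [H j hj, mul_zero]

/-- Multiplying the system by the coefficients of `∏_{b ∉ T} (X - γ b)`, for a set `T` of at
most `t` indices, kills every index outside `T` and leaves a nonsingular Vandermonde system
on `T`. -/
theorem hartmann_tzeng_bound {K ι : Type*} [Field K] {S : Finset ι} {c B γ : ι → K}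
    (hc : ∀ a ∈ S, c a ≠ 0) (hB : Set.InjOn B S) (hγ : Set.InjOn γ S) (hS : S.Nonempty)
    {t k : ℕ} (ht : 1 ≤ t) (H : ∀ i < t, ∀ j ≤ k, ∑ a ∈ S, c a * B a ^ i * γ a ^ j = 0) :
    t + k + 1 ≤ #S := by
  classical
  by_contra! hSt
  obtain ⟨T, hTS, hT⟩ := exists_subset_card_eq (min_le_right t #S)
  set Q : K[X] := ∏ b ∈ S \ T, (X - C (γ b))
  have hQdeg : Q.natDegree ≤ k := by
    rw [natDegree_prod_of_monic _ _ fun b _ => monic_X_sub_C (γ b)]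
    simp only [natDegree_X_sub_C, sum_const, smul_eq_mul, mul_one, card_sdiff_of_subset hTS]
    omega
  have hQT : ∀ a ∈ T, c a * Q.eval (γ a) ≠ 0 := by
    intro a ha
    refine mul_ne_zero (hc a (hTS ha)) ?_
    simp only [Q, eval_prod, eval_sub, eval_X, eval_C, prod_ne_zero_iff, mem_sdiff]
    exact fun b hb => sub_ne_zero.mpr fun h => hb.2 (hγ (hTS ha) hb.1 h ▸ ha)
  have hsumT : ∀ i < #T, ∑ a ∈ T, c a * Q.eval (γ a) * B a ^ i = 0 := by
    intro i hi
    rw [sum_subset hTS fun a ha haT => ?_]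
    · exact sum_mul_eval_mul_pow_eq_zero (H i (by omega)) hQdeg
    · simp [Q, eval_prod, prod_eq_zero (mem_sdiff.mpr ⟨ha, haT⟩)]
  obtain ⟨a, ha⟩ : T.Nonempty := by
    rw [← card_pos]; have := hS.card_pos; omega
  exact hQT a ha (eq_zero_of_forall_sum_mul_pow_eq_zero (hB.mono hTS) hsumT a ha)

theorem Polynomial.hartmann_tzeng_card_support {K : Type*} [Field K] {ζ : K} {N m : ℕ}
    (hζ : IsPrimitiveRoot ζ N) (hm : m.Coprime N) {g : K[X]} (hg : g ≠ 0)
    (hdeg : g.natDegree < N) {s t k : ℕ} (ht : 1 ≤ t)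
    (hroot : ∀ j ≤ k, ∀ i < t, g.eval (ζ ^ (s + j * m + i)) = 0) : t + k + 1 ≤ #g.support := by
  have hlt : ∀ a ∈ g.support, a < N := fun a ha => (le_natDegree_of_mem_supp a ha).trans_lt hdeg
  refine hartmann_tzeng_bound (c := fun a => g.coeff a * (ζ ^ a) ^ s) (B := (ζ ^ ·))
    (γ := ((ζ ^ m) ^ ·)) (fun a ha => mul_ne_zero (mem_support_iff.mp ha) ?_)
    (fun a ha b hb => hζ.pow_inj (hlt a ha) (hlt b hb))
    (fun a ha b hb => (hζ.pow_of_coprime m hm).pow_inj (hlt a ha) (hlt b hb))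
    (support_nonempty.mpr hg) ht fun i hi j hj => ?_
  · exact pow_ne_zero _ (pow_ne_zero _ (hζ.ne_zero (by omega)))
  · rw [← hroot j hj i hi, eval_eq_sum, sum_def]
    refine sum_congr rfl fun a _ => ?_
    ring

theorem isPrimitiveRoot_card_sub_one {F : Type*} [Field F] [Finite F] {α : F} (hα : α ≠ 0)
    (hgen : ∀ x : F, x ≠ 0 → ∃ j : ℕ, α ^ j = x) : IsPrimitiveRoot α (Nat.card F - 1) := by
  have hmem (u : Fˣ) : u ∈ Subgroup.zpowers (Units.mk0 α hα) := by
    obtain ⟨j, hj⟩ := hgen u u.ne_zero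
    exact ⟨j, Units.ext (by simp [hj])⟩
  rw [IsPrimitiveRoot.iff_orderOf, ← Units.val_mk0 hα, orderOf_units,
    orderOf_eq_card_of_forall_mem_zpowers hmem, Nat.card_units]

theorem LDA_one_add_f_lower_bound_general (n : ℕ) (hn : 1 ≤ n) (Fq : Type) [Field Fq] [Fintype Fq]
    (hq : Fintype.card Fq = 2 ^ n) (f : Fq → ZMod 2) (α : Fq)
    (hα : ∀ x : Fq, x ≠ 0 ↔ ∃ j : ℕ, α ^ j = x) (l k δ m : ℕ)
    (hδ2 : δ ≤ 2 ^ n - 1) (hgcd : Nat.gcd m (2 ^ n - 1) = 1)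
    (hzero : ∀ j ≤ k, ∀ i < 2 ^ n - δ, f (α ^ (l + j * m + (δ - 1) + i)) = 0)
    (e : ℕ) (he2 : 2 ^ n - δ + k ≤ ∑ i ∈ Finset.Icc 1 e, n.choose i)
    (hemin : ∀ e' : ℕ, 1 ≤ e' → e' < e →
      ∑ i ∈ Finset.Icc 1 e', n.choose i < 2 ^ n - δ + k) :
    ∀ g : Polynomial Fq, g ≠ 0 → g.natDegree ≤ 2 ^ n - 1 →
      (∀ x : Fq, f x = 0 → g.eval x = 0) → e - 1 ≤ algDeg g := by
  intro g hg hgdeg hgann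
  have hen : e ≤ n := by
    by_contra! hne
    have := hemin n hn hne
    rw [Nat.sum_Icc_choose_eq_of_le hne.le] at he2
    omega
  by_contra! hd
  have hweight : ∀ a ∈ g.support, (Nat.digits 2 a).sum ≤ algDeg g :=
    fun a ha => le_sup (f := fun i => (Nat.digits 2 i).sum) ha
  have hdeg : g.natDegree < 2 ^ n - 1 := by
    refine hgdeg.lt_of_ne fun h => ?_
    have := hweight _ (natDegree_mem_support_of_nonzero hg)
    rw [h, Nat.digits_two_sum_two_pow_sub_one] at this
    omega
  have hα' : IsPrimitiveRoot α (2 ^ n - 1) := by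
    simpa [Nat.card_eq_fintype_card, hq] using
      isPrimitiveRoot_card_sub_one ((hα α).mpr ⟨1, pow_one α⟩) fun x hx => (hα x).mp hx
  have hmonomials := hartmann_tzeng_card_support hα' hgcd hg hdeg (s := l + (δ - 1))
    (t := 2 ^ n - δ) (by omega) fun j hj i hi =>
      hgann _ (by rw [add_right_comm l]; exact hzero j hj i hi)
  have hcount := card_le_sum_choose_of_digits_sum_le (n := n)
    (fun a ha => (le_natDegree_of_mem_supp a ha).trans_lt (by omega)) hweight
  have hsmall : ∑ i ∈ Icc 1 (algDeg g), n.choose i < 2 ^ n - δ + k := by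
    rcases Nat.eq_zero_or_pos (algDeg g) with h0 | hpos
    · rw [h0, Icc_eq_empty (by omega), sum_empty]; omega
    · exact hemin _ hpos (by omega)
  rw [Nat.sum_range_choose_eq_one_add_sum_Icc] at hcount
  omega

/-- if the zero set of `f` contains `⋃_{j=0}^{k} V(α, l + j·m + δ - 1, q - δ)`
(`α` a primitive element of `F_q`, `gcd(m, q-1) = 1`), and `e` is the smallest positive
integer with `∑_{i=1}^{e} C(n,i) ≥ q - δ + k`, then every nonzero annihilator of `1 + f`
(a nonzero polynomial of degree `≤ q - 1` vanishing on the zero set of `f`) has algebraic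
degree at least `e - 1`, i.e. `LDA(1 + f) ≥ e - 1`. -/
theorem LDA_one_add_f_lower_bound (n : ℕ) (hn : 1 ≤ n) (Fq : Type) [Field Fq] [Fintype Fq]
    [DecidableEq Fq] (hq : Fintype.card Fq = 2 ^ n) (f : Fq → ZMod 2) (α : Fq)
    (hα : ∀ x : Fq, x ≠ 0 ↔ ∃ j : ℕ, α ^ j = x) (l k δ m : ℕ)
    (hδ1 : 1 ≤ δ) (hδ2 : δ ≤ 2 ^ n - 1) (hm : 1 ≤ m) (hgcd : Nat.gcd m (2 ^ n - 1) = 1)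
    (hzero : ∀ j ≤ k, ∀ i < 2 ^ n - δ, f (α ^ (l + j * m + (δ - 1) + i)) = 0)
    (e : ℕ) (he1 : 1 ≤ e) (he2 : 2 ^ n - δ + k ≤ ∑ i ∈ Finset.Icc 1 e, n.choose i)
    (hemin : ∀ e' : ℕ, 1 ≤ e' → e' < e →
      ∑ i ∈ Finset.Icc 1 e', n.choose i < 2 ^ n - δ + k) :
    ∀ g : Polynomial Fq, g ≠ 0 → g.natDegree ≤ 2 ^ n - 1 →
      (∀ x : Fq, f x = 0 → g.eval x = 0) → e - 1 ≤ algDeg g :=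
  LDA_one_add_f_lower_bound_general n hn Fq hq f α hα l k δ m hδ2 hgcd hzero e he2 hemin
end

section
/- Let n ≥ 1, q = 2^n, and F_q the finite field with q elements. Let S ⊆ F_q \ {0} be a set of nonzero elements that is closed under inversion, i.e., s ∈ S implies s^{−1} ∈ S. Then the cyclic code C(S) = {(a_1, …, a_{q−1}) ∈ F_q^{q−1} : ∑_{i=1}^{q−1} a_i x^i = 0 for all x ∈ S} is a linear code with complementary dual (LCD): C(S) ∩ C(S)^⊥ = {0}, where C(S)^⊥ = {v ∈ F_q^{q−1} : ∑_{i=1}^{q−1} v_i c_i = 0 for all c ∈ C(S)}. Equivalently, its generator polynomial ∏_{s ∈ S}(X − s) is self-reciprocal. -/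
/-! For `a : Fin (q - 1) → F_q` write `A(u) = ∑ a_i u^(i+1)` on `F_qˣ`, i.e. `A = a ᵥ* powMatrix`.
Since `∑_u u^k` vanishes unless `q - 1 ∣ k`, the code's bilinear form reads
`∑ a_i c_i = -∑_u A(u) C(u⁻¹)`, which also makes `a ↦ A` a linear isomorphism.
If `a ∈ C(S)` is orthogonal to `C(S)` and `x ∉ S`, the word `c` with `C = δ_{x⁻¹}` lies in `C(S)`
because `S` is closed under inversion, so `0 = -A(x)`; thus `A = 0` and `a = 0`.
For the generator polynomial, `(X - s).reverse = -s (X - s⁻¹)` and inversion permutes `S`. -/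

open Polynomial

/-- The code `C(S)`: tuples `(a_1, …, a_N)` with `∑_{i=1}^{N} a_i x^i = 0` for all `x ∈ S`,
as a linear subspace of `Fq^N`. -/
def codeC (Fq : Type) [Field Fq] (N : ℕ) (S : Set Fq) : Submodule Fq (Fin N → Fq) where
  carrier := {a | ∀ x ∈ S, ∑ i : Fin N, a i * x ^ ((i : ℕ) + 1) = 0}
  add_mem' := by
    intro a b ha hb x hx
    simp only [Set.mem_setOf_eq] at *
    simp [add_mul, Finset.sum_add_distrib, ha x hx, hb x hx]
  zero_mem' := by intro x hx; simp
  smul_mem' := by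
    intro c a ha x hx
    simp only [Set.mem_setOf_eq] at *
    simp [mul_assoc, ← Finset.mul_sum, ha x hx]

namespace Polynomial

variable {R : Type*} [CommSemiring R] [NoZeroDivisors R]

theorem reverse_prod {ι : Type*} (s : Finset ι) (f : ι → R[X]) :
    (∏ i ∈ s, f i).reverse = ∏ i ∈ s, (f i).reverse := by
  induction s using Finset.cons_induction with
  | empty => rw [Finset.prod_empty, Finset.prod_empty, ← C_1, reverse_C]
  | cons i s hi ih => rw [Finset.prod_cons, reverse_mul_of_domain, ih, Finset.prod_cons]

end Polynomial

section SelfReciprocal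

variable {K : Type*} [Field K]

theorem reverse_X_sub_C_of_ne_zero {s : K} (hs : s ≠ 0) :
    (X - C s).reverse = C (-s) * (X - C s⁻¹) := by
  have h : (X - C s).reverse = 1 - C s * X := by
    have hX : (X : K[X]).reverse = 1 := by
      rw [← one_mul X, reverse_mul_X, ← C_1, reverse_C]
    simpa [sub_eq_add_neg, hX] using reverse_add_C (X : K[X]) (-s)
  rw [h, mul_sub, ← C_mul, neg_mul, mul_inv_cancel₀ hs, C_neg, C_neg, C_1]
  ring

theorem prod_X_sub_C_inv_of_inv_mem {S : Finset K} (hSinv : ∀ s ∈ S, s⁻¹ ∈ S) :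
    ∏ s ∈ S, (X - C s⁻¹) = ∏ s ∈ S, (X - C s) :=
  Finset.prod_nbij' (·⁻¹) (·⁻¹) hSinv hSinv (by simp) (by simp) (by simp)

theorem coeff_zero_prod_X_sub_C (S : Finset K) :
    (∏ s ∈ S, (X - C s)).coeff 0 = ∏ s ∈ S, -s := by
  simp [coeff_zero_eq_eval_zero, eval_prod]

theorem prod_X_sub_C_eq_C_inv_coeff_zero_mul_reverse {S : Finset K} (hS0 : (0 : K) ∉ S)
    (hSinv : ∀ s ∈ S, s⁻¹ ∈ S) :
    ∏ s ∈ S, (X - C s) = C ((∏ s ∈ S, (X - C s)).coeff 0)⁻¹ * (∏ s ∈ S, (X - C s)).reverse := by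
  have hne : ∀ s ∈ S, s ≠ 0 := fun s hs h => hS0 (h ▸ hs)
  have hrev : (∏ s ∈ S, (X - C s)).reverse = C (∏ s ∈ S, -s) * ∏ s ∈ S, (X - C s) := by
    rw [reverse_prod, Finset.prod_congr rfl fun s hs => reverse_X_sub_C_of_ne_zero (hne s hs),
      Finset.prod_mul_distrib, map_prod, prod_X_sub_C_inv_of_inv_mem hSinv]
  have hc0 : ∏ s ∈ S, -s ≠ 0 := Finset.prod_ne_zero_iff.2 fun s hs => neg_ne_zero.2 (hne s hs)
  rw [hrev, coeff_zero_prod_X_sub_C, ← mul_assoc, ← C_mul, inv_mul_cancel₀ hc0, C_1, one_mul]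

end SelfReciprocal

open Matrix

section Orthogonality

def powMatrix (K : Type) [Field K] (N : ℕ) : Matrix (Fin N) Kˣ K :=
  of fun i u => (u : K) ^ ((i : ℕ) + 1)

variable {K : Type} [Field K] {N : ℕ}

theorem mem_codeC_iff {S : Set K} (hS0 : (0 : K) ∉ S) {a : Fin N → K} :
    a ∈ codeC K N S ↔ ∀ u : Kˣ, (u : K) ∈ S → (a ᵥ* powMatrix K N) u = 0 :=
  ⟨fun ha u hu => ha u hu,
    fun ha x hx => ha (Units.mk0 x (ne_of_mem_of_not_mem hx hS0)) hx⟩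

variable [Fintype K] [DecidableEq K]

theorem sum_units_pow_mul_inv_pow (hN : Fintype.card K = N + 1) {i j : ℕ} (hi : i < N)
    (hj : j < N) :
    ∑ u : Kˣ, (u : K) ^ (i + 1) * ((u⁻¹ : Kˣ) : K) ^ (j + 1) = if i = j then -1 else 0 := by
  have hcard : Fintype.card Kˣ = N := by rw [Fintype.card_units, hN, Nat.add_sub_cancel]
  have hpow : ∀ u : Kˣ, u ^ (i + 1) * u⁻¹ ^ (j + 1) = u ^ (i + N - j) := by
    intro u
    rw [inv_pow, mul_inv_eq_iff_eq_mul, ← pow_add, show i + N - j + (j + 1) = i + 1 + N by omega,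
      ← hcard, pow_add u (i + 1), pow_card_eq_one, mul_one]
  have hdvd : N ∣ i + N - j ↔ i = j := by
    refine ⟨fun ⟨k, hk⟩ => ?_, fun h => ⟨1, by omega⟩⟩
    rcases k with _ | _ | k
    · omega
    · omega
    · have : 2 * N ≤ N * (k + 1 + 1) := by nlinarith
      omega
  calc ∑ u : Kˣ, (u : K) ^ (i + 1) * ((u⁻¹ : Kˣ) : K) ^ (j + 1)
      = ∑ u : Kˣ, ((u : K) ^ (i + N - j)) := by
        simp_rw [← Units.val_pow_eq_pow_val, ← Units.val_mul, hpow]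
    _ = if i = j then -1 else 0 := by
        rw [FiniteField.sum_pow_units, hN, Nat.add_sub_cancel]
        exact if_congr hdvd rfl rfl

theorem powMatrix_mul_transpose_inv (hN : Fintype.card K = N + 1) :
    powMatrix K N * ((powMatrix K N).submatrix id (·⁻¹))ᵀ = -1 := by
  ext i j
  simp only [mul_apply, transpose_apply, submatrix_apply, id, powMatrix, of_apply]
  rw [sum_units_pow_mul_inv_pow hN i.2 j.2, neg_apply, one_apply]
  simp only [Fin.val_inj]
  split_ifs <;> simp

theorem dotProduct_eq_neg_sum_units (hN : Fintype.card K = N + 1) (a c : Fin N → K) :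
    a ⬝ᵥ c = -∑ u : Kˣ, (a ᵥ* powMatrix K N) u * (c ᵥ* powMatrix K N) u⁻¹ := by
  have h : ∑ u : Kˣ, (a ᵥ* powMatrix K N) u * (c ᵥ* powMatrix K N) u⁻¹
      = (a ᵥ* powMatrix K N) ⬝ᵥ (((powMatrix K N).submatrix id (·⁻¹))ᵀ *ᵥ c) := by
    rw [mulVec_transpose]; rfl
  rw [h, dotProduct_mulVec, vecMul_vecMul, powMatrix_mul_transpose_inv hN, vecMul_neg,
    vecMul_one, neg_dotProduct, neg_neg]

theorem bijective_vecMulLinear_powMatrix (hN : Fintype.card K = N + 1) :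
    Function.Bijective (powMatrix K N).vecMulLinear := by
  have hinj : Function.Injective (powMatrix K N).vecMulLinear := by
    intro a b hab
    have hinv : ∀ v : Fin N → K,
        v = -(v ᵥ* powMatrix K N ᵥ* ((powMatrix K N).submatrix id (·⁻¹))ᵀ) := fun v => by
      rw [vecMul_vecMul, powMatrix_mul_transpose_inv hN, vecMul_neg, vecMul_one, neg_neg]
    rw [hinv a, hinv b]
    exact congrArg (fun w => -(w ᵥ* _)) hab
  refine ⟨hinj, (LinearMap.injective_iff_surjective_of_finrank_eq_finrank ?_).1 hinj⟩
  rw [Module.finrank_fintype_fun_eq_card, Module.finrank_fintype_fun_eq_card, Fintype.card_fin,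
    Fintype.card_units, hN, Nat.add_sub_cancel]

theorem eq_zero_of_mem_codeC_of_forall_dotProduct_eq_zero (hN : Fintype.card K = N + 1)
    {S : Set K} (hS0 : (0 : K) ∉ S) (hSinv : ∀ s ∈ S, s⁻¹ ∈ S) {a : Fin N → K}
    (ha : a ∈ codeC K N S) (horth : ∀ c ∈ codeC K N S, a ⬝ᵥ c = 0) : a = 0 := by
  obtain ⟨hinj, hsurj⟩ := bijective_vecMulLinear_powMatrix hN
  refine hinj ?_
  rw [map_zero]
  funext u
  by_cases hu : (u : K) ∈ S
  · exact (mem_codeC_iff hS0).1 ha u hu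
  obtain ⟨c, hc⟩ := hsurj (Pi.single u⁻¹ 1)
  have hc' : ∀ v : Kˣ, (c ᵥ* powMatrix K N) v⁻¹ = if v = u then 1 else 0 := fun v => by
    simp [← vecMulLinear_apply, hc, Pi.single_apply]
  have hcS : c ∈ codeC K N S := (mem_codeC_iff hS0).2 fun v hv => by
    have : v⁻¹ ≠ u := by rintro rfl; exact hu (by simpa using hSinv _ hv)
    simpa [this] using hc' v⁻¹
  have := dotProduct_eq_neg_sum_units hN a c
  simpa [horth c hcS, hc'] using this

end Orthogonality

theorem codeC_LCD_general (n : ℕ) (Fq : Type) [Field Fq] [Fintype Fq]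
    (hq : Fintype.card Fq = 2 ^ n) (S : Finset Fq)
    (hS0 : (0 : Fq) ∉ S) (hSinv : ∀ s ∈ S, s⁻¹ ∈ S) :
    (∀ a : Fin (2 ^ n - 1) → Fq, a ∈ codeC Fq (2 ^ n - 1) ↑S →
      (∀ c ∈ codeC Fq (2 ^ n - 1) ↑S, ∑ i : Fin (2 ^ n - 1), a i * c i = 0) → a = 0) ∧
    (∏ s ∈ S, (X - C s)) =
      C ((∏ s ∈ S, (X - C s)).coeff 0)⁻¹ * (∏ s ∈ S, (X - C s)).reverse := by
  classical
  have hN : Fintype.card Fq = 2 ^ n - 1 + 1 := by rw [hq, Nat.sub_add_cancel Nat.one_le_two_pow]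
  exact ⟨fun a ha horth => eq_zero_of_mem_codeC_of_forall_dotProduct_eq_zero hN hS0 hSinv ha horth,
    prod_X_sub_C_eq_C_inv_coeff_zero_mul_reverse hS0 hSinv⟩

/-- if `S` is a set of nonzero elements of `F_q` closed under inversion, then
the cyclic code `C(S)` is LCD, i.e. `C(S) ∩ C(S)^⊥ = {0}`; equivalently its generator
polynomial `∏_{s ∈ S} (X - s)` is self-reciprocal. -/
theorem codeC_LCD (n : ℕ) (hn : 1 ≤ n) (Fq : Type) [Field Fq] [Fintype Fq]
    [DecidableEq Fq] (hq : Fintype.card Fq = 2 ^ n) (S : Finset Fq)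
    (hS0 : (0 : Fq) ∉ S) (hSinv : ∀ s ∈ S, s⁻¹ ∈ S) :
    (∀ a : Fin (2 ^ n - 1) → Fq, a ∈ codeC Fq (2 ^ n - 1) ↑S →
      (∀ c ∈ codeC Fq (2 ^ n - 1) ↑S, ∑ i : Fin (2 ^ n - 1), a i * c i = 0) → a = 0) ∧
    (∏ s ∈ S, (X - C s)) =
      C ((∏ s ∈ S, (X - C s)).coeff 0)⁻¹ * (∏ s ∈ S, (X - C s)).reverse :=
  codeC_LCD_general n Fq hq S hS0 hSinv
end
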